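/- arXiv:1408.4748 — 5 statements merged into one kernel-verified Lean document; each statement's English description precedes it below -/
import Mathlib

section
/- Let x ∈ ℝ≥0^n satisfy A ⊗ x ≥ x, and let τ be a partial map on supp(x) with a_{i,τ(i)} x_{τ(i)} ≥ x_i for all i ∈ supp(x). Then every cycle of τ, i.e. every sequence i, τ(i), …, τ^ℓ(i) = i, has weight a_{i,τ(i)} · a_{τ(i),τ²(i)} · … · a_{τ^{ℓ−1}(i),i} ≥ 1. -/
open Finset

section CycleWeight

variable {α : Type*} (a : α → α → NNReal) (x : α → NNReal) (τ : α → α)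

theorem pos_iterate_of_le_mul (h : ∀ j, 0 < x j → x j ≤ a j (τ j) * x (τ j))
    {i : α} (hi : 0 < x i) (m : ℕ) : 0 < x (τ^[m] i) := by
  induction m with
  | zero => exact hi
  | succ m ih =>
    rw [Function.iterate_succ_apply']
    exact pos_of_mul_pos_right (ih.trans_le (h _ ih)) zero_le

theorem le_prod_mul_iterate (h : ∀ j, 0 < x j → x j ≤ a j (τ j) * x (τ j))
    {i : α} (hi : 0 < x i) (m : ℕ) :
    x i ≤ (∏ s ∈ range m, a (τ^[s] i) (τ^[s + 1] i)) * x (τ^[m] i) := by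
  induction m with
  | zero => simp
  | succ m ih =>
    calc x i ≤ (∏ s ∈ range m, a (τ^[s] i) (τ^[s + 1] i)) * x (τ^[m] i) := ih
      _ ≤ (∏ s ∈ range m, a (τ^[s] i) (τ^[s + 1] i)) *
          (a (τ^[m] i) (τ^[m + 1] i) * x (τ^[m + 1] i)) := by
        rw [Function.iterate_succ_apply']
        gcongr
        exact h _ (pos_iterate_of_le_mul a x τ h hi m)
      _ = (∏ s ∈ range (m + 1), a (τ^[s] i) (τ^[s + 1] i)) * x (τ^[m + 1] i) := by
        rw [prod_range_succ, mul_assoc]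

theorem one_le_prod_of_iterate_eq (h : ∀ j, 0 < x j → x j ≤ a j (τ j) * x (τ j))
    {i : α} (hi : 0 < x i) {ℓ : ℕ} (hc : τ^[ℓ] i = i) :
    1 ≤ ∏ s ∈ range ℓ, a (τ^[s] i) (τ^[s + 1] i) := by
  have hcycle := le_prod_mul_iterate a x τ h hi ℓ
  rw [hc] at hcycle
  exact le_of_mul_le_mul_right (by rwa [one_mul]) hi

end CycleWeight

theorem stmt5_general {n : ℕ} (A : Matrix (Fin n) (Fin n) NNReal) (x : Fin n → NNReal)
    (τ : Fin n → Fin n)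
    (h : ∀ i, 0 < x i → x i ≤ A i (τ i) * x (τ i))
    (i : Fin n) (hi : 0 < x i) (ℓ : ℕ) (hc : τ^[ℓ] i = i) :
    1 ≤ ∏ s ∈ Finset.range ℓ, A (τ^[s] i) (τ^[s + 1] i) :=
  one_le_prod_of_iterate_eq A x τ h hi hc

/-- If `A ⊗ x ≥ x` is witnessed by a partial map `τ` on the support of `x`, i.e.
`a_{i,τ(i)} x_{τ(i)} ≥ x_i` whenever `x_i > 0`, then every cycle
`i, τ(i), …, τ^ℓ(i) = i` starting in the support of `x` has weight
`∏_{s<ℓ} a_{τ^s(i), τ^{s+1}(i)} ≥ 1`. -/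
theorem stmt5 {n : ℕ} (A : Matrix (Fin n) (Fin n) NNReal) (x : Fin n → NNReal)
    (τ : Fin n → Fin n)
    (h : ∀ i, 0 < x i → x i ≤ A i (τ i) * x (τ i))
    (i : Fin n) (hi : 0 < x i) (ℓ : ℕ) (hℓ : 1 ≤ ℓ) (hc : τ^[ℓ] i = i) :
    1 ≤ ∏ s ∈ Finset.range ℓ, A (τ^[s] i) (τ^[s + 1] i) :=
  stmt5_general A x τ h i hi ℓ hc
end

section
/- V*(A) equals the union, over all admissible strategies τ (partial maps τ on a subset of {1,…,n} into itself with a_{i,τ(i)} > 0 and such that every cycle of τ has weight ≥ 1), of the sets {x ∈ ℝ≥0^n : A^τ ⊗ x ≥ x}, where A^τ is the matrix whose only nonzero entries are a_{i,τ(i)} for i ∈ dom(τ); that is, V*(A) = ⋃_{τ admissible} {x ∈ ℝ≥0^n : A^τ ⊗ x ≥ x}. -/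
/-- Max-times matrix-vector product. -/
def mv {n : ℕ} (A : Matrix (Fin n) (Fin n) NNReal) (x : Fin n → NNReal) : Fin n → NNReal :=
  fun i => Finset.univ.sup fun j => A i j * x j

/-- Supereigenvector cone. -/
def Vstar {n : ℕ} (A : Matrix (Fin n) (Fin n) NNReal) : Set (Fin n → NNReal) :=
  {x | ∀ i, x i ≤ mv A x i}

/-- The matrix `A^τ`. -/
def Atau {n : ℕ} (A : Matrix (Fin n) (Fin n) NNReal) (D : Finset (Fin n))
    (τ : Fin n → Fin n) : Matrix (Fin n) (Fin n) NNReal :=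
  fun i j => if i ∈ D ∧ j = τ i then A i j else 0

/-- `V*(A)` is the union of the cones `V*(A^τ)` over all admissible strategies `τ`
(partial maps of a subset `D` of the index set into itself, with `a_{i,τ(i)} > 0` on `D`
and every cycle of `τ` of weight `≥ 1`). -/
theorem stmt8 {n : ℕ} (A : Matrix (Fin n) (Fin n) NNReal) :
    Vstar A = ⋃ (D : Finset (Fin n)) (τ : Fin n → Fin n)
      (_ : ∀ i ∈ D, τ i ∈ D)
      (_ : ∀ i ∈ D, 0 < A i (τ i))
      (_ : ∀ i ∈ D, ∀ ℓ : ℕ, 1 ≤ ℓ → τ^[ℓ] i = i →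
            1 ≤ ∏ s ∈ Finset.range ℓ, A (τ^[s] i) (τ^[s + 1] i)),
      Vstar (Atau A D τ) := by
  classical
  ext x
  simp only [Set.mem_iUnion]
  constructor
  · intro hx
    set D : Finset (Fin n) := Finset.univ.filter (fun i => 0 < x i) with hD
    have hmemD : ∀ i, i ∈ D ↔ 0 < x i := by intro i; simp [hD]
    have hch : ∀ i : Fin n, ∃ j, x i ≤ A i j * x j := by
      intro i
      obtain ⟨j, _, hj⟩ := Finset.exists_mem_eq_sup Finset.univ ⟨i, Finset.mem_univ i⟩
        (fun j => A i j * x j)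
      exact ⟨j, hj ▸ hx i⟩
    choose τ hxle using hch
    have hposprod : ∀ i, 0 < x i → 0 < A i (τ i) ∧ 0 < x (τ i) := by
      intro i hi
      have h : 0 < A i (τ i) * x (τ i) := lt_of_lt_of_le hi (hxle i)
      rw [pos_iff_ne_zero, mul_ne_zero_iff] at h
      exact ⟨pos_iff_ne_zero.2 h.1, pos_iff_ne_zero.2 h.2⟩
    have hmap : ∀ i ∈ D, τ i ∈ D := by
      intro i hi
      rw [hmemD] at hi ⊢
      exact (hposprod i hi).2
    have key : ∀ i, ∀ s : ℕ,
        x i ≤ (∏ t ∈ Finset.range s, A (τ^[t] i) (τ^[t + 1] i)) * x (τ^[s] i) := by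
      intro i s
      induction s with
      | zero => simp
      | succ s ih =>
        calc x i ≤ (∏ t ∈ Finset.range s, A (τ^[t] i) (τ^[t + 1] i)) * x (τ^[s] i) := ih
        _ ≤ (∏ t ∈ Finset.range s, A (τ^[t] i) (τ^[t + 1] i)) *
              (A (τ^[s] i) (τ (τ^[s] i)) * x (τ (τ^[s] i))) :=
            mul_le_mul_right (hxle _) _
        _ = (∏ t ∈ Finset.range (s + 1), A (τ^[t] i) (τ^[t + 1] i)) * x (τ^[s + 1] i) := by
            rw [Finset.prod_range_succ, Function.iterate_succ_apply' τ s i]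
            ring
    refine ⟨D, τ, hmap, ?_, ?_, ?_⟩
    · intro i hi
      exact (hposprod i ((hmemD i).1 hi)).1
    · intro i hi ℓ _ hcyc
      have h := key i ℓ
      rw [hcyc] at h
      have hi' : 0 < x i := (hmemD i).1 hi
      exact le_of_mul_le_mul_right (by rwa [one_mul]) hi'
    · intro i
      by_cases hi : i ∈ D
      · have h1 : Atau A D τ i (τ i) * x (τ i) ≤ mv (Atau A D τ) x i := by
          unfold mv
          exact Finset.le_sup (f := fun j => Atau A D τ i j * x j) (Finset.mem_univ (τ i))
        have h2 : Atau A D τ i (τ i) = A i (τ i) := by simp [Atau, hi]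
        rw [h2] at h1
        exact le_trans (hxle i) h1
      · have hx0 : x i = 0 := by
          by_contra h
          exact hi ((hmemD i).2 (pos_iff_ne_zero.2 h))
        rw [hx0]
        exact zero_le
  · rintro ⟨D, τ, -, -, -, hx⟩ i
    refine le_trans (hx i) (Finset.sup_mono_fun ?_)
    intro j _
    refine mul_le_mul_left ?_ _
    unfold Atau
    split
    · exact le_rfl
    · exact zero_le
end

section
/- Let τ be an admissible strategy for A with domain D (every cycle of τ has weight ≥ 1, all a_{i,τ(i)} > 0), and for k ∈ D define the vector x^{(τ,k)} by: x^{(τ,k)}_k = 1; x^{(τ,k)}_i = (weight of the unique τ-walk from k to i)^{−1} if i ≠ k is reachable from k under τ; x^{(τ,k)}_i = 0 otherwise. Then A ⊗ x^{(τ,k)} ≥ x^{(τ,k)}, i.e. x^{(τ,k)} ∈ V*(A). -/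
/-!
Let `W m` be the weight of the first `m` steps of the `τ`-walk from `k`, so that
`x (τ^[m] k) = (W m)⁻¹` when `m` is the first time the walk visits `τ^[m] k`. If `τ^[q] k` is
first visited at time `p ≤ q`, the steps between `p` and `q` form a `τ`-cycle, of weight `≥ 1`,
so `W p ≤ W q`; hence `(W q)⁻¹ ≤ x (τ^[q] k)` for every `q`. For `i = τ^[m] k` with `m` minimal
this gives `x i = a_{i,τ i} (W (m+1))⁻¹ ≤ a_{i,τ i} x (τ i) ≤ (A ⊗ x)_i`, while `x i = 0` when
`i` is not reachable from `k`.
-/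

open Function

section WalkWeight

variable {ι M : Type*} (A : Matrix ι ι M) (τ : ι → ι)

def walkWeight [CommMonoid M] (k : ι) (m : ℕ) : M :=
  ∏ s ∈ Finset.range m, A (τ^[s] k) (τ^[s + 1] k)

variable {A τ}

theorem walkWeight_succ [CommMonoid M] (k : ι) (m : ℕ) :
    walkWeight A τ k (m + 1) = walkWeight A τ k m * A (τ^[m] k) (τ^[m + 1] k) :=
  Finset.prod_range_succ _ m

theorem walkWeight_add [CommMonoid M] (k : ι) (p ℓ : ℕ) :
    walkWeight A τ k (p + ℓ) = walkWeight A τ k p * walkWeight A τ (τ^[p] k) ℓ := by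
  rw [walkWeight, Finset.prod_range_add]
  congr 1
  refine Finset.prod_congr rfl fun s _ => ?_
  rw [← iterate_add_apply, ← iterate_add_apply, add_comm s p, add_comm (s + 1) p, add_assoc]

theorem walkWeight_pos [CommMonoidWithZero M] [PartialOrder M] [ZeroLEOneClass M]
    [PosMulStrictMono M] [Nontrivial M] {k : ι} (hstep : ∀ m, 0 < A (τ^[m] k) (τ^[m + 1] k))
    (m : ℕ) : 0 < walkWeight A τ k m :=
  Finset.prod_pos fun s _ => hstep s

theorem walkWeight_le_of_iterate_eq [CommMonoid M] [Preorder M] [MulLeftMono M] {k : ι}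
    {p q : ℕ} (hcyc : ∀ ℓ, 1 ≤ ℓ → τ^[ℓ] (τ^[p] k) = τ^[p] k → 1 ≤ walkWeight A τ (τ^[p] k) ℓ)
    (hpq : p ≤ q) (hrep : τ^[q] k = τ^[p] k) : walkWeight A τ k p ≤ walkWeight A τ k q := by
  obtain ⟨ℓ, rfl⟩ := Nat.exists_eq_add_of_le hpq
  rw [walkWeight_add]
  rcases ℓ.eq_zero_or_pos with rfl | hℓ
  · simp [walkWeight]
  · refine le_mul_of_one_le_right' (hcyc ℓ hℓ ?_)
    rwa [← iterate_add_apply, add_comm]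

end WalkWeight

section OrbitVector

variable {ι : Type*} {A : Matrix ι ι NNReal} {τ : ι → ι} {k : ι} {x : ι → NNReal}

theorem apply_iterate_eq_inv_walkWeight (hxk : x k = 1)
    (hxr : ∀ i, i ≠ k → ∀ m : ℕ, τ^[m] k = i → (∀ m' < m, τ^[m'] k ≠ i) →
      x i = (walkWeight A τ k m)⁻¹)
    {m : ℕ} (hmin : ∀ m' < m, τ^[m'] k ≠ τ^[m] k) : x (τ^[m] k) = (walkWeight A τ k m)⁻¹ := by
  by_cases hk : τ^[m] k = k
  · obtain rfl : m = 0 := by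
      by_contra hm
      exact hmin 0 (Nat.pos_of_ne_zero hm) hk.symm
    simp [walkWeight, hxk]
  · exact hxr _ hk m rfl hmin

theorem inv_walkWeight_le_apply_iterate (hstep : ∀ m, 0 < A (τ^[m] k) (τ^[m + 1] k))
    (hcyc : ∀ p ℓ, 1 ≤ ℓ → τ^[ℓ] (τ^[p] k) = τ^[p] k → 1 ≤ walkWeight A τ (τ^[p] k) ℓ)
    (hxk : x k = 1)
    (hxr : ∀ i, i ≠ k → ∀ m : ℕ, τ^[m] k = i → (∀ m' < m, τ^[m'] k ≠ i) →
      x i = (walkWeight A τ k m)⁻¹)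
    (q : ℕ) : (walkWeight A τ k q)⁻¹ ≤ x (τ^[q] k) := by
  classical
  have hq : ∃ p, τ^[p] k = τ^[q] k := ⟨q, rfl⟩
  set p := Nat.find hq
  have hp : τ^[p] k = τ^[q] k := Nat.find_spec hq
  have hxp : x (τ^[p] k) = (walkWeight A τ k p)⁻¹ :=
    apply_iterate_eq_inv_walkWeight hxk hxr fun m' hm' => hp ▸ Nat.find_min hq hm'
  rw [← hp, hxp]
  exact inv_anti₀ (walkWeight_pos hstep p)
    (walkWeight_le_of_iterate_eq (hcyc p) (Nat.find_min' hq rfl) hp.symm)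

end OrbitVector

theorem mul_le_mv {n : ℕ} (A : Matrix (Fin n) (Fin n) NNReal) (x : Fin n → NNReal) (i j : Fin n) :
    A i j * x j ≤ mv A x i :=
  Finset.le_sup (f := fun j => A i j * x j) (Finset.mem_univ j)

/-- Let `τ` be an admissible strategy for `A` with domain `D` (maps `D` into itself,
`a_{i,τ(i)} > 0` on `D`, every `τ`-cycle has weight `≥ 1`), let `k ∈ D`, and let
`x = x^{(τ,k)}`, i.e. `x_k = 1`, `x_i` is the reciprocal of the weight of the unique
(minimal) `τ`-walk from `k` to `i` when `i ≠ k` is reachable from `k`, and `x_i = 0`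
when `i` is not reachable from `k`. Then `A ⊗ x ≥ x`, i.e. `x ∈ V*(A)`. -/
theorem stmt12 {n : ℕ} (A : Matrix (Fin n) (Fin n) NNReal) (D : Finset (Fin n))
    (τ : Fin n → Fin n)
    (hmaps : ∀ i ∈ D, τ i ∈ D)
    (hpos : ∀ i ∈ D, 0 < A i (τ i))
    (hcyc : ∀ i ∈ D, ∀ ℓ : ℕ, 1 ≤ ℓ → τ^[ℓ] i = i →
      1 ≤ ∏ s ∈ Finset.range ℓ, A (τ^[s] i) (τ^[s + 1] i))
    (k : Fin n) (hk : k ∈ D)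
    (x : Fin n → NNReal)
    (hxk : x k = 1)
    (hxr : ∀ i : Fin n, i ≠ k → ∀ m : ℕ, τ^[m] k = i → (∀ m' < m, τ^[m'] k ≠ i) →
      x i = (∏ s ∈ Finset.range m, A (τ^[s] k) (τ^[s + 1] k))⁻¹)
    (hx0 : ∀ i : Fin n, (∀ m : ℕ, τ^[m] k ≠ i) → x i = 0) :
    ∀ i, x i ≤ mv A x i := by
  classical
  intro i
  by_cases hreach : ∃ m, τ^[m] k = i
  · have horbit : ∀ m, τ^[m] k ∈ D := fun m => Set.MapsTo.iterate (s := D) (fun j hj => hmaps j hj) m hk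
    have hstep : ∀ m, 0 < A (τ^[m] k) (τ^[m + 1] k) := fun m => by
      rw [iterate_succ_apply']
      exact hpos _ (horbit m)
    obtain ⟨m, rfl, hmin⟩ : ∃ m, τ^[m] k = i ∧ ∀ m' < m, τ^[m'] k ≠ i :=
      ⟨Nat.find hreach, Nat.find_spec hreach, fun _ => Nat.find_min hreach⟩
    calc x (τ^[m] k) = (walkWeight A τ k m)⁻¹ := apply_iterate_eq_inv_walkWeight hxk hxr hmin
      _ = A (τ^[m] k) (τ^[m + 1] k) * (walkWeight A τ k (m + 1))⁻¹ := by
        rw [walkWeight_succ, mul_inv, mul_comm, mul_assoc, inv_mul_cancel₀ (hstep m).ne', mul_one]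
      _ ≤ A (τ^[m] k) (τ^[m + 1] k) * x (τ^[m + 1] k) := by
        gcongr
        exact inv_walkWeight_le_apply_iterate hstep (fun p => hcyc _ (horbit p)) hxk hxr _
      _ ≤ mv A x (τ^[m] k) := by
        rw [iterate_succ_apply']
        exact mul_le_mv A x _ _
  · rw [hx0 i (not_exists.mp hreach)]
    exact zero_le
end

section
/- With τ an admissible strategy and x^{(τ,k)} defined as in the paper, the max cone V*(A^τ) = {x : A^τ ⊗ x ≥ x} is generated by the vectors x^{(τ,k)}, k ∈ dom(τ), together with the unit coordinate vectors e_i for i ∉ dom(τ): every x with A^τ ⊗ x ≥ x is a max combination of these vectors (equivalently, restricting to x supported in dom(τ), x is a max combination of the x^{(τ,k)}). -/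
/-! Any `x` with `A^τ ⊗ x ≥ x` vanishes off `D` and equals `⨆ₖ x k · x^{(τ,k)}`: the term
`k = i` recovers `x i`, and no term exceeds it, because iterating `x j ≤ a_{j,τ j} x (τ j)`
along the `τ`-walk from `k` to `i` gives `x k ≤ w · x i`, with `w` the weight of that walk,
so that `x k · w⁻¹ ≤ x i`. -/

open Finset

theorem le_prod_mul_iterate_s13 {ι M : Type*} [CommMonoid M] [Preorder M] [MulLeftMono M]
    (f : ι → ι) (w : ι → ι → M) {x : ι → M} (hx : ∀ j, x j ≤ w j (f j) * x (f j))
    (k : ι) (m : ℕ) :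
    x k ≤ (∏ s ∈ range m, w (f^[s] k) (f^[s + 1] k)) * x (f^[m] k) := by
  induction m with
  | zero => simp
  | succ m ih =>
    calc x k ≤ (∏ s ∈ range m, w (f^[s] k) (f^[s + 1] k)) * x (f^[m] k) := ih
      _ ≤ (∏ s ∈ range m, w (f^[s] k) (f^[s + 1] k)) *
            (w (f^[m] k) (f^[m + 1] k) * x (f^[m + 1] k)) := by
          gcongr
          rw [Function.iterate_succ_apply']
          exact hx _
      _ = _ := by rw [prod_range_succ, mul_assoc]

theorem mv_Atau_apply {n : ℕ} (A : Matrix (Fin n) (Fin n) NNReal) (D : Finset (Fin n))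
    (τ : Fin n → Fin n) (x : Fin n → NNReal) (i : Fin n) :
    mv (Atau A D τ) x i = if i ∈ D then A i (τ i) * x (τ i) else 0 := by
  unfold mv Atau
  split_ifs with hi
  · refine le_antisymm (Finset.sup_le fun j _ => ?_)
      (le_sup_of_le (mem_univ (τ i)) (by simp [hi]))
    by_cases hj : j = τ i
    · simp [hi, hj]
    · simp [hj]
  · simp [hi]

section

variable {n : ℕ} {A : Matrix (Fin n) (Fin n) NNReal} {D : Finset (Fin n)} {τ : Fin n → Fin n}
  {x : Fin n → NNReal}

theorem eq_zero_of_le_mv_Atau (hx : ∀ i, x i ≤ mv (Atau A D τ) x i) {i : Fin n}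
    (hi : i ∉ D) : x i = 0 := by
  simpa [mv_Atau_apply, hi] using hx i

theorem le_mul_of_le_mv_Atau (hx : ∀ i, x i ≤ mv (Atau A D τ) x i) (i : Fin n) :
    x i ≤ A i (τ i) * x (τ i) := by
  by_cases hi : i ∈ D
  · simpa [mv_Atau_apply, hi] using hx i
  · simp [eq_zero_of_le_mv_Atau hx hi]

theorem mul_le_of_le_mv_Atau (hx : ∀ i, x i ≤ mv (Atau A D τ) x i) {k : Fin n}
    {v : Fin n → NNReal} (hvk : v k = 1)
    (hvr : ∀ i : Fin n, i ≠ k → ∀ m : ℕ, τ^[m] k = i → (∀ m' < m, τ^[m'] k ≠ i) →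
      v i = (∏ s ∈ range m, A (τ^[s] k) (τ^[s + 1] k))⁻¹)
    (hv0 : ∀ i : Fin n, (∀ m : ℕ, τ^[m] k ≠ i) → v i = 0) (i : Fin n) :
    x k * v i ≤ x i := by
  by_cases hik : i = k
  · simp [hik, hvk]
  by_cases hreach : ∃ m, τ^[m] k = i
  · have hwalk := le_prod_mul_iterate_s13 τ A (le_mul_of_le_mv_Atau hx) k (Nat.find hreach)
    rw [Nat.find_spec hreach] at hwalk
    rw [hvr i hik _ (Nat.find_spec hreach) fun m' hm' => Nat.find_min hreach hm',
      ← div_eq_mul_inv]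
    exact div_le_of_le_mul₀ zero_le zero_le (by rwa [mul_comm] at hwalk)
  · simp [hv0 i (not_exists.mp hreach)]

end

theorem stmt13_general {n : ℕ} (A : Matrix (Fin n) (Fin n) NNReal) (D : Finset (Fin n))
    (τ : Fin n → Fin n)
    (X : Fin n → Fin n → NNReal)
    (hXk : ∀ k ∈ D, X k k = 1)
    (hXr : ∀ k ∈ D, ∀ i : Fin n, i ≠ k → ∀ m : ℕ, τ^[m] k = i → (∀ m' < m, τ^[m'] k ≠ i) →
      X k i = (∏ s ∈ Finset.range m, A (τ^[s] k) (τ^[s + 1] k))⁻¹)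
    (hX0 : ∀ k ∈ D, ∀ i : Fin n, (∀ m : ℕ, τ^[m] k ≠ i) → X k i = 0) :
    ∀ x : Fin n → NNReal, (∀ i, x i ≤ mv (Atau A D τ) x i) →
      ∃ c : Fin n → NNReal, x = fun i =>
        Finset.univ.sup fun k =>
          c k * (if k ∈ D then X k i else if i = k then 1 else 0) := by
  intro x hx
  refine ⟨x, funext fun i => le_antisymm ?_ (Finset.sup_le fun k _ => ?_)⟩
  · refine le_trans ?_ (le_sup (mem_univ i))
    by_cases hi : i ∈ D
    · simp [hi, hXk i hi]
    · simp [eq_zero_of_le_mv_Atau hx hi]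
  · by_cases hk : k ∈ D
    · simpa [hk] using mul_le_of_le_mv_Atau hx (hXk k hk) (hXr k hk) (hX0 k hk) i
    · simp [eq_zero_of_le_mv_Atau hx hk]

/-- Let `τ` be an admissible strategy with domain `D` and, for `k ∈ D`, let
`X k = x^{(τ,k)}` (`X k k = 1`, `X k i` the reciprocal of the weight of the unique
`τ`-walk from `k` to `i` when reachable, `0` otherwise). Then the max cone
`V*(A^τ) = {x : A^τ ⊗ x ≥ x}` is generated by the vectors `X k`, `k ∈ D`, together
with the unit coordinate vectors `e_k`, `k ∉ D`: every `x` with `A^τ ⊗ x ≥ x` is a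
max combination of these vectors. -/
theorem stmt13 {n : ℕ} (A : Matrix (Fin n) (Fin n) NNReal) (D : Finset (Fin n))
    (τ : Fin n → Fin n)
    (hmaps : ∀ i ∈ D, τ i ∈ D)
    (hpos : ∀ i ∈ D, 0 < A i (τ i))
    (hcyc : ∀ i ∈ D, ∀ ℓ : ℕ, 1 ≤ ℓ → τ^[ℓ] i = i →
      1 ≤ ∏ s ∈ Finset.range ℓ, A (τ^[s] i) (τ^[s + 1] i))
    (X : Fin n → Fin n → NNReal)
    (hXk : ∀ k ∈ D, X k k = 1)
    (hXr : ∀ k ∈ D, ∀ i : Fin n, i ≠ k → ∀ m : ℕ, τ^[m] k = i → (∀ m' < m, τ^[m'] k ≠ i) →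
      X k i = (∏ s ∈ Finset.range m, A (τ^[s] k) (τ^[s + 1] k))⁻¹)
    (hX0 : ∀ k ∈ D, ∀ i : Fin n, (∀ m : ℕ, τ^[m] k ≠ i) → X k i = 0) :
    ∀ x : Fin n → NNReal, (∀ i, x i ≤ mv (Atau A D τ) x i) →
      ∃ c : Fin n → NNReal, x = fun i =>
        Finset.univ.sup fun k =>
          c k * (if k ∈ D then X k i else if i = k then 1 else 0) :=
  stmt13_general A D τ X hXk hXr hX0
end

section
/- For any closed max cone K ⊆ ℝ≥0^n, the set E of scaled extremals (extremals u with max_i u_i = 1) is nonempty whenever K ≠ {0}, K = span(E), and E is the unique scaled basis of K (no element of E is a max combination of the others). -/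
/-!
Every point `x` of a closed max cone `K` is the maximum over `i` of extremals `z ≤ x` with
`z i = x i`: take for `z` a minimizer of the coordinate sum on the compact set
`{z ∈ K | z ≤ x, z i = x i}`; if `z = u ⊔ v` with `u, v ∈ K`, one of `u, v` lies in that set
below `z`, hence equals `z`. Rescaled to sup-norm one, these extremals generate `K`.

Conversely, an extremal written as a max combination of any generating set equals one of its
terms, so a scaled extremal belongs to every scaled generating set. And a scaled generator `b`
of an independent set is extremal: if `b = u ⊔ v` with `u, v ≠ b`, the multiples of `b` in
`u` and `v` have coefficients below one and can be dropped, which writes `b` as a max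
combination of the other generators.
-/

/-- The max cone spanned by `S`. -/
def spanOf {n : ℕ} (S : Set (Fin n → NNReal)) : Set (Fin n → NNReal) :=
  {x | ∃ (m : ℕ) (v : Fin m → Fin n → NNReal) (c : Fin m → NNReal),
    (∀ j, v j ∈ S) ∧ x = fun i => Finset.univ.sup fun j => c j * v j i}

/-- `x` is an extremal of `K`. -/
def IsExtremal {n : ℕ} (K : Set (Fin n → NNReal)) (x : Fin n → NNReal) : Prop :=
  ∀ u ∈ K, ∀ v ∈ K, x = (fun i => max (u i) (v i)) → x = u ∨ x = v

section MaxCone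

variable {n : ℕ}

structure IsMaxCone (K : Set (Fin n → NNReal)) : Prop where
  zero_mem : 0 ∈ K
  supClosed : SupClosed K
  smul_mem : ∀ (c : NNReal), ∀ x ∈ K, c • x ∈ K

def scaledExtremals (K : Set (Fin n → NNReal)) : Set (Fin n → NNReal) :=
  {u | u ∈ K ∧ IsExtremal K u ∧ Finset.univ.sup u = 1}

def IsMaxIndependent (B : Set (Fin n → NNReal)) : Prop :=
  ∀ b ∈ B, b ∉ spanOf (B \ {b})

theorem mem_spanOf_iff {S : Set (Fin n → NNReal)} {x : Fin n → NNReal} :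
    x ∈ spanOf S ↔ ∃ (m : ℕ) (v : Fin m → Fin n → NNReal) (c : Fin m → NNReal),
      (∀ j, v j ∈ S) ∧ x = Finset.univ.sup fun j => c j • v j := by
  simp only [spanOf, Set.mem_ofPred_eq, funext_iff, Finset.sup_apply, Pi.smul_apply, smul_eq_mul]

theorem finsetSup_smul_mem_spanOf {S : Set (Fin n → NNReal)} {ι : Type*} (s : Finset ι)
    (v : ι → Fin n → NNReal) (c : ι → NNReal) (hv : ∀ j ∈ s, v j ∈ S) :
    (s.sup fun j => c j • v j) ∈ spanOf S := by
  refine mem_spanOf_iff.2 ⟨s.card, fun k => v (s.equivFin.symm k),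
    fun k => c (s.equivFin.symm k), fun k => hv _ (s.equivFin.symm k).2, ?_⟩
  rw [← Finset.sup_attach, ← Finset.univ_eq_attach,
    ← Finset.univ_map_equiv_to_embedding s.equivFin.symm, Finset.sup_map]
  rfl

theorem mem_spanOf_of_mem {S : Set (Fin n → NNReal)} {u : Fin n → NNReal} (hu : u ∈ S) :
    u ∈ spanOf S := by
  simpa using finsetSup_smul_mem_spanOf {()} (fun _ => u) (fun _ => 1) (by simpa using hu)

theorem spanOf_empty : spanOf (∅ : Set (Fin n → NNReal)) = {0} := by
  ext x
  simp only [mem_spanOf_iff, Set.mem_empty_iff_false, Set.mem_singleton_iff]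
  constructor
  · rintro ⟨m, v, c, hv, rfl⟩
    have : IsEmpty (Fin m) := ⟨fun j => hv j⟩
    simp [Finset.univ_eq_empty, bot_eq_zero]
  · rintro rfl
    exact ⟨0, Fin.elim0, Fin.elim0, Fin.elim0, by simp [bot_eq_zero]⟩

theorem smul_finsetSup {ι : Type*} (c : NNReal) (s : Finset ι) (f : ι → Fin n → NNReal) :
    c • s.sup f = s.sup fun j => c • f j := by
  ext i
  simp [Finset.sup_apply, NNReal.mul_finset_sup]

theorem finsetSup_smul {ι : Type*} (s : Finset ι) (c : ι → NNReal) (b : Fin n → NNReal) :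
    s.sup c • b = s.sup fun j => c j • b := by
  ext i
  simp [Finset.sup_apply, NNReal.finset_sup_mul]

theorem isMaxCone_spanOf (S : Set (Fin n → NNReal)) : IsMaxCone (spanOf S) where
  zero_mem := by
    simpa [bot_eq_zero] using finsetSup_smul_mem_spanOf (S := S) (∅ : Finset Unit) 0 0 (by simp)
  supClosed := by
    rintro _ hx _ hy
    obtain ⟨m, v, c, hv, rfl⟩ := mem_spanOf_iff.1 hx
    obtain ⟨m', v', c', hv', rfl⟩ := mem_spanOf_iff.1 hy
    have := finsetSup_smul_mem_spanOf Finset.univ (Sum.elim v v') (Sum.elim c c')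
      (fun j _ => j.rec (fun j => hv j) (fun j => hv' j))
    rwa [← Finset.univ_disjSum_univ, Finset.sup_disjSum] at this
  smul_mem := by
    rintro a _ hx
    obtain ⟨m, v, c, hv, rfl⟩ := mem_spanOf_iff.1 hx
    simpa [smul_finsetSup, smul_smul] using
      finsetSup_smul_mem_spanOf Finset.univ v (fun j => a * c j) fun j _ => hv j

theorem IsMaxCone.finsetSup_mem {K : Set (Fin n → NNReal)} (hK : IsMaxCone K) {ι : Type*}
    (s : Finset ι) {w : ι → Fin n → NNReal} (hw : ∀ j ∈ s, w j ∈ K) : s.sup w ∈ K :=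
  Finset.sup_induction hK.zero_mem (fun _ ha _ hb => hK.supClosed ha hb) hw

theorem IsMaxCone.spanOf_subset {K S : Set (Fin n → NNReal)} (hK : IsMaxCone K) (hS : S ⊆ K) :
    spanOf S ⊆ K := by
  intro x hx
  obtain ⟨m, v, c, hv, rfl⟩ := mem_spanOf_iff.1 hx
  exact hK.finsetSup_mem _ fun j _ => hK.smul_mem _ _ (hS (hv j))

end MaxCone

section Extremals

variable {n : ℕ} {K : Set (Fin n → NNReal)}

theorem IsExtremal.exists_eq_of_eq_finsetSup (hK : SupClosed K) {x : Fin n → NNReal}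
    (hx : IsExtremal K x) (hx0 : x ≠ 0) {ι : Type*} {s : Finset ι} {w : ι → Fin n → NNReal}
    (hw : ∀ j ∈ s, w j ∈ K) (h : x = s.sup w) : ∃ j ∈ s, x = w j := by
  classical
  induction s using Finset.induction_on with
  | empty => exact absurd (h.trans bot_eq_zero) hx0
  | insert a s ha ih =>
    rw [Finset.sup_insert] at h
    rcases s.eq_empty_or_nonempty with rfl | hs
    · exact ⟨a, Finset.mem_insert_self a ∅, by simpa using h⟩
    have hsK : s.sup w ∈ K :=
      hK.finsetSup_mem hs fun j hj => hw j (Finset.mem_insert_of_mem hj)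
    rcases hx _ (hw a (Finset.mem_insert_self a s)) _ hsK h with h' | h'
    · exact ⟨a, Finset.mem_insert_self a s, h'⟩
    · obtain ⟨j, hj, hxj⟩ := ih (fun j hj => hw j (Finset.mem_insert_of_mem hj)) h'
      exact ⟨j, Finset.mem_insert_of_mem hj, hxj⟩

theorem IsExtremal.smul (hsmul : ∀ (c : NNReal), ∀ x ∈ K, c • x ∈ K) {z : Fin n → NNReal}
    (hz : IsExtremal K z) {c : NNReal} (hc : c ≠ 0) : IsExtremal K (c • z) := by
  rintro u hu v hv (huv : c • z = u ⊔ v)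
  have hz' : z = c⁻¹ • u ⊔ c⁻¹ • v := by
    rw [← inv_smul_smul₀ hc z, huv]
    exact funext fun i => NNReal.mul_sup _ _ _
  rcases hz _ (hsmul _ u hu) _ (hsmul _ v hv) hz' with h | h
  · exact .inl (by rw [h, smul_inv_smul₀ hc])
  · exact .inr (by rw [h, smul_inv_smul₀ hc])

theorem exists_isExtremal_le_apply_eq (hK : IsClosed K) {x : Fin n → NNReal} (hx : x ∈ K)
    (i : Fin n) : ∃ z ∈ K, IsExtremal K z ∧ z ≤ x ∧ z i = x i := by
  set S := K ∩ Set.Icc 0 x ∩ {z | z i = x i}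
  have hS : IsCompact S := (isCompact_Icc.inter_left hK).inter_right
    (isClosed_eq (continuous_apply i) continuous_const)
  obtain ⟨z, ⟨⟨hzK, -, hzx⟩, hzi⟩, hmin⟩ :=
    hS.exists_isMinOn ⟨x, ⟨hx, fun _ => zero_le, le_rfl⟩, rfl⟩
      (continuous_finsetSum Finset.univ fun j _ => continuous_apply j).continuousOn
  refine ⟨z, hzK, ?_, hzx, hzi⟩
  have hbelow : ∀ w ∈ K, w ≤ z → w i = x i → z = w := by
    intro w hw hwz hwi
    have hsum := le_antisymm (Finset.sum_le_sum fun j _ => hwz j)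
      (isMinOn_iff.1 hmin w ⟨⟨hw, fun _ => zero_le, hwz.trans hzx⟩, hwi⟩)
    exact funext fun j =>
      ((Finset.sum_eq_sum_iff_of_le fun j _ => hwz j).1 hsum j (Finset.mem_univ j)).symm
  rintro u hu v hv (huv : z = u ⊔ v)
  rcases max_eq_iff.1 ((congrFun huv i).symm.trans hzi) with ⟨hui, -⟩ | ⟨hvi, -⟩
  · exact .inl (hbelow u hu (huv ▸ le_sup_left) hui)
  · exact .inr (hbelow v hv (huv ▸ le_sup_right) hvi)

theorem IsExtremal.mem_spanOf_scaledExtremals (hsmul : ∀ (c : NNReal), ∀ x ∈ K, c • x ∈ K)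
    {z : Fin n → NNReal} (hzK : z ∈ K) (hz : IsExtremal K z) :
    z ∈ spanOf (scaledExtremals K) := by
  set s := Finset.univ.sup z
  rcases eq_or_ne s 0 with hs | hs
  · rw [show z = 0 from funext fun i => le_zero_iff.1 (hs ▸ Finset.le_sup (Finset.mem_univ i))]
    exact (isMaxCone_spanOf _).zero_mem
  have hmem : s⁻¹ • z ∈ scaledExtremals K :=
    ⟨hsmul _ z hzK, hz.smul hsmul (inv_ne_zero hs),
      (NNReal.mul_finset_sup s⁻¹ Finset.univ z).symm.trans (inv_mul_cancel₀ hs)⟩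
  rw [← smul_inv_smul₀ hs z]
  exact (isMaxCone_spanOf _).smul_mem s _ (mem_spanOf_of_mem hmem)

theorem IsMaxCone.eq_spanOf_scaledExtremals (hK : IsMaxCone K) (hclosed : IsClosed K) :
    K = spanOf (scaledExtremals K) := by
  refine (hK.spanOf_subset fun u hu => hu.1).antisymm' fun x hx => ?_
  choose z hzK hz hzx hzi using exists_isExtremal_le_apply_eq hclosed hx
  have hxz : x = Finset.univ.sup z :=
    le_antisymm (fun i => hzi i ▸ Finset.le_sup (f := z) (Finset.mem_univ i) i)
      (Finset.sup_le fun i _ => hzx i)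
  rw [hxz]
  exact (isMaxCone_spanOf _).finsetSup_mem _ fun i _ =>
    (hz i).mem_spanOf_scaledExtremals hK.smul_mem (hzK i)

end Extremals

section Basis

variable {n : ℕ}

theorem exists_eq_sup_smul_of_mem_spanOf {S : Set (Fin n → NNReal)} {w : Fin n → NNReal}
    (hw : w ∈ spanOf S) (b : Fin n → NNReal) :
    ∃ y ∈ spanOf (S \ {b}), ∃ r : NNReal, w = y ⊔ r • b := by
  classical
  obtain ⟨m, v, c, hv, rfl⟩ := mem_spanOf_iff.1 hw
  set s := Finset.univ.filter fun j => v j = b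
  refine ⟨(Finset.univ.filter fun j => ¬v j = b).sup fun j => c j • v j,
    finsetSup_smul_mem_spanOf _ _ _ fun j hj => ⟨hv j, (Finset.mem_filter.1 hj).2⟩, s.sup c, ?_⟩
  have hb : (s.sup fun j => c j • b) = s.sup fun j => c j • v j :=
    Finset.sup_congr rfl fun j hj => by rw [(Finset.mem_filter.1 hj).2]
  rw [finsetSup_smul, hb, sup_comm, ← Finset.sup_union, Finset.filter_union_filter_not_eq]

theorem lt_one_of_eq_sup_smul {w y b : Fin n → NNReal} {r : NNReal} (h : w = y ⊔ r • b)
    (hwb : w ≤ b) (hne : w ≠ b) : r < 1 := by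
  by_contra! hr
  exact hne (hwb.antisymm fun i =>
    (le_mul_of_one_le_left zero_le hr).trans ((h ▸ le_sup_right : r • b ≤ w) i))

theorem le_of_le_sup_smul_self {y b : Fin n → NNReal} {r : NNReal} (h : b ≤ y ⊔ r • b)
    (hr : r < 1) : b ≤ y := by
  intro i
  by_contra! hlt
  rcases le_max_iff.1 (h i) with h' | h'
  · exact h'.not_gt hlt
  · exact h'.not_gt (mul_lt_of_lt_one_left (zero_le.trans_lt hlt) hr)

theorem IsMaxIndependent.isExtremal_spanOf {B : Set (Fin n → NNReal)}
    (hB : IsMaxIndependent B) {b : Fin n → NNReal} (hb : b ∈ B) :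
    IsExtremal (spanOf B) b := by
  rintro u hu v hv (huv : b = u ⊔ v)
  by_contra! hne
  obtain ⟨yu, hyu, ru, rfl⟩ := exists_eq_sup_smul_of_mem_spanOf hu b
  obtain ⟨yv, hyv, rv, rfl⟩ := exists_eq_sup_smul_of_mem_spanOf hv b
  have hub : yu ⊔ ru • b ≤ b := le_sup_left.trans_eq huv.symm
  have hvb : yv ⊔ rv • b ≤ b := le_sup_right.trans_eq huv.symm
  have hr : max ru rv < 1 := max_lt (lt_one_of_eq_sup_smul rfl hub (Ne.symm hne.1))
    (lt_one_of_eq_sup_smul rfl hvb (Ne.symm hne.2))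
  have hmono : ∀ r ≤ max ru rv, r • b ≤ max ru rv • b := fun r hle i =>
    mul_le_mul_of_nonneg_right hle zero_le
  have hbsup : b ≤ yu ⊔ yv ⊔ max ru rv • b :=
    calc b = (yu ⊔ ru • b) ⊔ (yv ⊔ rv • b) := huv
      _ ≤ yu ⊔ yv ⊔ max ru rv • b :=
        sup_le (sup_le_sup le_sup_left (hmono _ (le_max_left _ _)))
          (sup_le_sup le_sup_right (hmono _ (le_max_right _ _)))
  have hbeq : b = yu ⊔ yv := (le_of_le_sup_smul_self hbsup hr).antisymm
    (sup_le (le_sup_left.trans hub) (le_sup_left.trans hvb))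
  exact hB b hb (hbeq ▸ (isMaxCone_spanOf _).supClosed hyu hyv)

theorem scaledExtremals_spanOf_subset {B : Set (Fin n → NNReal)}
    (hB : ∀ b ∈ B, Finset.univ.sup b = 1) : scaledExtremals (spanOf B) ⊆ B := by
  rintro u ⟨huB, hu, hu1⟩
  obtain ⟨m, v, c, hv, huv⟩ := mem_spanOf_iff.1 huB
  have hu0 : u ≠ 0 := by
    rintro rfl
    exact zero_ne_one ((Finset.sup_bot (α := NNReal) Finset.univ).symm.trans hu1)
  obtain ⟨j, -, hj⟩ := hu.exists_eq_of_eq_finsetSup (isMaxCone_spanOf B).supClosed hu0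
    (fun j _ => (isMaxCone_spanOf B).smul_mem _ _ (mem_spanOf_of_mem (hv j))) huv
  have hc : c j = 1 :=
    calc c j = c j * Finset.univ.sup (v j) := by rw [hB _ (hv j), mul_one]
      _ = Finset.univ.sup u := by rw [hj]; exact NNReal.mul_finset_sup _ _ _
      _ = 1 := hu1
  rw [hj, hc, one_smul]
  exact hv j

theorem IsMaxIndependent.eq_scaledExtremals_spanOf {B : Set (Fin n → NNReal)}
    (hB : IsMaxIndependent B) (hB₁ : ∀ b ∈ B, Finset.univ.sup b = 1) :
    B = scaledExtremals (spanOf B) :=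
  (scaledExtremals_spanOf_subset hB₁).antisymm' fun b hb =>
    ⟨mem_spanOf_of_mem hb, hB.isExtremal_spanOf hb, hB₁ b hb⟩

end Basis

/-- For a closed max cone `K ⊆ ℝ≥0^n` containing `0`, the set `E` of scaled extremals
is nonempty whenever `K ≠ {0}`, `K = span E`, and `E` is the unique scaled basis of `K`
(a scaled generating set none of whose elements is a max combination of the others). -/
theorem stmt16 {n : ℕ} (K : Set (Fin n → NNReal))
    (h0 : (0 : Fin n → NNReal) ∈ K)
    (hsup : ∀ x ∈ K, ∀ y ∈ K, (fun i => max (x i) (y i)) ∈ K)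
    (hsmul : ∀ (c : NNReal), ∀ x ∈ K, (fun i => c * x i) ∈ K)
    (hclosed : IsClosed K) :
    (K ≠ {0} → {u | u ∈ K ∧ IsExtremal K u ∧ Finset.univ.sup u = 1}.Nonempty) ∧
    K = spanOf {u | u ∈ K ∧ IsExtremal K u ∧ Finset.univ.sup u = 1} ∧
    (∀ B : Set (Fin n → NNReal),
      (∀ b ∈ B, Finset.univ.sup b = 1) →
      K = spanOf B →
      (∀ b ∈ B, b ∉ spanOf (B \ {b})) →
      B = {u | u ∈ K ∧ IsExtremal K u ∧ Finset.univ.sup u = 1}) := by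
  have hK : IsMaxCone K := ⟨h0, fun x hx y hy => hsup x hx y hy, hsmul⟩
  have hgen : K = spanOf (scaledExtremals K) := hK.eq_spanOf_scaledExtremals hclosed
  refine ⟨fun hne => Set.nonempty_iff_ne_empty.2 fun hE => hne ?_, hgen, ?_⟩
  · calc K = spanOf ∅ := hgen.trans (congrArg spanOf hE)
      _ = {0} := spanOf_empty
  · rintro B hB₁ rfl hB
    exact IsMaxIndependent.eq_scaledExtremals_spanOf hB hB₁
end
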